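/- arXiv:2211.04909 — 3 statements merged into one kernel-verified Lean document; each statement's English description precedes it below -/
import Mathlib

section
/- For HKVs ξ_i, ξ_j on ℝⁿ with respect to η (with homothety constants λ_i, λ_j), and for any x, p ∈ ℝⁿ, the quadratic charge along the straight line t ↦ x + t p, namely f(t) = η(ξ_i(x + t p), ξ_j(x + t p)), has constant second derivative: f''(t) = 2 η(Dξ_i(x)p, Dξ_j(x)p) for all t ∈ ℝ. -/
noncomputable section

/-- The bilinear form `η` on `ℝⁿ` is symmetric. -/
def IsSymmForm {n : ℕ} (η : (Fin n → ℝ) →ₗ[ℝ] (Fin n → ℝ) →ₗ[ℝ] ℝ) : Prop :=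
  ∀ v w : Fin n → ℝ, η v w = η w v

/-- The bilinear form `η` on `ℝⁿ` is nondegenerate. -/
def IsNondegForm {n : ℕ} (η : (Fin n → ℝ) →ₗ[ℝ] (Fin n → ℝ) →ₗ[ℝ] ℝ) : Prop :=
  ∀ v : Fin n → ℝ, (∀ w : Fin n → ℝ, η v w = 0) → v = 0

/-- `ξ` is a homothetic Killing vector of the constant (flat) metric `η` on `ℝⁿ` with
homothety constant `lam`: it is a smooth vector field with
`η(Dξ(x)v, w) + η(v, Dξ(x)w) = lam · η(v, w)` for all `x, v, w`. -/
def IsFlatHKV {n : ℕ} (η : (Fin n → ℝ) →ₗ[ℝ] (Fin n → ℝ) →ₗ[ℝ] ℝ)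
    (ξ : (Fin n → ℝ) → Fin n → ℝ) (lam : ℝ) : Prop :=
  ContDiff ℝ (⊤ : ℕ∞) ξ ∧
    ∀ x v w : Fin n → ℝ,
      η (fderiv ℝ ξ x v) w + η v (fderiv ℝ ξ x w) = lam * η v w

end

/-!
Differentiating the homothetic Killing equation shows that the second derivative `D²ξ(x)`, which
is symmetric in its two arguments, is skew-adjoint for `η` in its last two slots. A tensor
symmetric in one pair of slots and skew in an overlapping pair vanishes, so `Dξ` is constant and
`ξ` is affine. The charge along a straight line is then a quadratic polynomial in `t` whose leading
coefficient is `η(Dξᵢ(x) p, Dξⱼ(x) p)`.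
-/

theorem apply_eq_zero_of_symm_of_skew {α R : Type*} [CommRing R] [NoZeroDivisors R]
    [NeZero (2 : R)] {η : α → α → R} {T : α → α → α} (hT : ∀ u v, T u v = T v u)
    (hskew : ∀ u v w, η (T u v) w + η (T u w) v = 0) (u v w : α) :
    η (T u v) w = 0 := by
  have h₁ := hskew w u v
  have h₂ := hskew v w u
  rw [hT w u, hT w v] at h₁
  rw [hT v u] at h₂
  have h : (2 : R) * η (T u v) w = 0 := by linear_combination hskew u v w - h₁ + h₂
  exact (mul_eq_zero.1 h).resolve_left two_ne_zero

theorem fderiv_fderiv_eq_zero_of_homothetic_killing {E : Type*} [NormedAddCommGroup E]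
    [NormedSpace ℝ E] {B : E →L[ℝ] E →L[ℝ] ℝ} (hB : ∀ v w, B v w = B w v)
    (hnd : ∀ v, (∀ w, B v w = 0) → v = 0) {ξ : E → E} {lam : ℝ} (hξ : ContDiff ℝ 2 ξ)
    (hkill : ∀ x v w, B (fderiv ℝ ξ x v) w + B v (fderiv ℝ ξ x w) = lam * B v w) (x : E) :
    fderiv ℝ (fderiv ℝ ξ) x = 0 := by
  set D2 := fderiv ℝ (fderiv ℝ ξ) x
  have hD2 : HasFDerivAt (fderiv ℝ ξ) D2 x :=
    ((hξ.fderiv_right (by norm_num)).differentiable one_ne_zero x).hasFDerivAt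
  have hpart : ∀ v w, HasFDerivAt (fun y => B (fderiv ℝ ξ y v) w)
      (((B.flip w).comp (ContinuousLinearMap.apply ℝ E v)).comp D2) x := fun v w =>
    ((B.flip w).comp (ContinuousLinearMap.apply ℝ E v)).hasFDerivAt.comp x hD2
  have hskew : ∀ u v w, B (D2 u v) w + B (D2 u w) v = 0 := by
    intro u v w
    have hconst : (fun y => B (fderiv ℝ ξ y v) w + B (fderiv ℝ ξ y w) v) = fun _ => lam * B v w :=
      funext fun y => by rw [← hB v, hkill]
    have h := ((hpart v w).fun_add (hpart w v)).fderiv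
    rw [hconst, fderiv_const_apply] at h
    simpa using (DFunLike.congr_fun h u).symm
  ext u v
  have hsymm : ∀ u v, D2 u v = D2 v u := (hξ.contDiffAt.isSymmSndFDerivAt (by simp)).eq
  simp [hnd _ (apply_eq_zero_of_symm_of_skew (η := fun a b => B a b) hsymm hskew u v)]

theorem ContinuousLinearMap.deriv_deriv_of_bilinear_of_hasDerivAt_const {𝕜 E F G : Type*}
    [NontriviallyNormedField 𝕜] [NormedAddCommGroup E] [NormedSpace 𝕜 E]
    [NormedAddCommGroup F] [NormedSpace 𝕜 F] [NormedAddCommGroup G] [NormedSpace 𝕜 G]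
    (B : E →L[𝕜] F →L[𝕜] G) {u : 𝕜 → E} {v : 𝕜 → F} {u' : E} {v' : F}
    (hu : ∀ s, HasDerivAt u u' s) (hv : ∀ s, HasDerivAt v v' s) (t : 𝕜) :
    deriv (deriv fun s => B (u s) (v s)) t = B u' v' + B u' v' := by
  have h₁ : deriv (fun s => B (u s) (v s)) = fun s => B (u s) v' + B u' (v s) :=
    funext fun s => (B.hasDerivAt_of_bilinear (fun _ => hu s) fun _ => hv s).deriv
  have h₂ := (B.hasDerivAt_of_bilinear (fun _ => hu t) fun _ => hasDerivAt_const t v').fun_add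
    (B.hasDerivAt_of_bilinear (fun _ => hasDerivAt_const t u') fun _ => hv t)
  simpa [h₁] using h₂.deriv

namespace IsFlatHKV

variable {n : ℕ} {η : (Fin n → ℝ) →ₗ[ℝ] (Fin n → ℝ) →ₗ[ℝ] ℝ} {ξ : (Fin n → ℝ) → Fin n → ℝ}
  {lam : ℝ}

theorem fderiv_eq (hsymm : IsSymmForm η) (hnd : IsNondegForm η) (h : IsFlatHKV η ξ lam)
    (x y : Fin n → ℝ) : fderiv ℝ ξ y = fderiv ℝ ξ x :=
  is_const_of_fderiv_eq_zero
    ((h.1.fderiv_right (m := 1) (WithTop.coe_le_coe.2 le_top)).differentiable one_ne_zero)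
    (fderiv_fderiv_eq_zero_of_homothetic_killing (B := η.toContinuousBilinearMap) hsymm hnd
      (h.1.of_le (WithTop.coe_le_coe.2 le_top)) h.2) y x

theorem hasDerivAt_line (hsymm : IsSymmForm η) (hnd : IsNondegForm η) (h : IsFlatHKV η ξ lam)
    (x p : Fin n → ℝ) (s : ℝ) : HasDerivAt (fun s : ℝ => ξ (x + s • p)) (fderiv ℝ ξ x p) s := by
  have hline : HasDerivAt (fun s : ℝ => x + s • p) p s := by
    simpa using ((hasDerivAt_id s).smul_const p).const_add x
  have h' := ((h.1.differentiable (by simp)) (x + s • p)).hasFDerivAt.comp_hasDerivAt s hline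
  rwa [h.fderiv_eq hsymm hnd x] at h'

end IsFlatHKV

theorem flat_hkv_quadCharge_second_deriv_general {n : ℕ}
    (η : (Fin n → ℝ) →ₗ[ℝ] (Fin n → ℝ) →ₗ[ℝ] ℝ)
    (hsymm : IsSymmForm η) (hnd : IsNondegForm η)
    (ξi ξj : (Fin n → ℝ) → Fin n → ℝ) (lami lamj : ℝ)
    (hi : IsFlatHKV η ξi lami) (hj : IsFlatHKV η ξj lamj) :
    ∀ x p : Fin n → ℝ, ∀ t : ℝ,
      deriv (deriv (fun s => η (ξi (x + s • p)) (ξj (x + s • p)))) t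
        = 2 * η (fderiv ℝ ξi x p) (fderiv ℝ ξj x p) := by
  intro x p t
  have h := η.toContinuousBilinearMap.deriv_deriv_of_bilinear_of_hasDerivAt_const
    (hi.hasDerivAt_line hsymm hnd x p) (hj.hasDerivAt_line hsymm hnd x p) t
  simpa [two_mul] using h

/-- For flat HKVs `ξ_i, ξ_j`, the quadratic charge along the straight line
`t ↦ x + t p`, namely `f(t) = η(ξ_i(x + t p), ξ_j(x + t p))`, has constant second derivative
`f''(t) = 2 η(Dξ_i(x) p, Dξ_j(x) p)`. -/
theorem flat_hkv_quadCharge_second_deriv {n : ℕ} (hn : 1 ≤ n)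
    (η : (Fin n → ℝ) →ₗ[ℝ] (Fin n → ℝ) →ₗ[ℝ] ℝ)
    (hsymm : IsSymmForm η) (hnd : IsNondegForm η)
    (ξi ξj : (Fin n → ℝ) → Fin n → ℝ) (lami lamj : ℝ)
    (hi : IsFlatHKV η ξi lami) (hj : IsFlatHKV η ξj lamj) :
    ∀ x p : Fin n → ℝ, ∀ t : ℝ,
      deriv (deriv (fun s => η (ξi (x + s • p)) (ξj (x + s • p)))) t
        = 2 * η (fderiv ℝ ξi x p) (fderiv ℝ ξj x p) :=
  flat_hkv_quadCharge_second_deriv_general η hsymm hnd ξi ξj lami lamj hi hj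
end

section
/- In flat space, the third time derivative of the quadratic charge V_{ij} vanishes along geodesics: for HKVs ξ_i, ξ_j on ℝⁿ with respect to η (with homothety constants λ_i, λ_j) and any x, p ∈ ℝⁿ, the function f(t) = η(ξ_i(x + t p), ξ_j(x + t p)) satisfies f'''(t) = 0 for all t; explicitly, f(t) = η(ξ_i(x), ξ_j(x)) + t [η(Dξ_i(x)p, ξ_j(x)) + η(ξ_i(x), Dξ_j(x)p)] + t² η(Dξ_i(x)p, Dξ_j(x)p). -/
/-! Second derivatives vanish because `(u, v, w) ↦ η (D²ξ u v) w` is symmetric in `(u, v)`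
(Schwarz) and, by differentiating the homothety equation, antisymmetric in `(v, w)`; such a
trilinear form is zero, so by nondegeneracy `D²ξ = 0` and `ξ` is affine. Along the line
`x + t p` both fields are then affine in `t`, so their `η`-pairing is a quadratic polynomial. -/

theorem eq_zero_of_symm_of_antisymm {E M : Type*} [AddCommGroup M] [IsAddTorsionFree M]
    (S : E → E → E → M) (hsymm : ∀ u v w, S u v w = S v u w)
    (hanti : ∀ u v w, S u v w = -S u w v) (u v w : E) : S u v w = 0 :=
  self_eq_neg.mp <|
    calc S u v w = -S u w v := hanti u v w
      _ = -S w u v := by rw [hsymm u w]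
      _ = S w v u := by rw [hanti w u v, neg_neg]
      _ = S v w u := hsymm w v u
      _ = -S v u w := hanti v w u
      _ = -S u v w := by rw [hsymm v u]

theorem apply_add_eq_of_fderiv_fderiv_eq_zero {E F : Type*} [NormedAddCommGroup E]
    [NormedSpace ℝ E] [NormedAddCommGroup F] [NormedSpace ℝ F] {f : E → F}
    (hf : Differentiable ℝ f) (hf' : Differentiable ℝ (fderiv ℝ f))
    (hf'' : ∀ y, fderiv ℝ (fderiv ℝ f) y = 0) (x v : E) :
    f (x + v) = f x + fderiv ℝ f x v := by
  have hconst : ∀ y, fderiv ℝ f y = fderiv ℝ f x :=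
    fun y => is_const_of_fderiv_eq_zero hf' hf'' y x
  have hg : ∀ y, fderiv ℝ (fun z => f z - fderiv ℝ f x z) y = 0 := fun y => by
    rw [fderiv_fun_sub (hf y) (fderiv ℝ f x).differentiableAt, ContinuousLinearMap.fderiv,
      hconst y, sub_self]
  have := is_const_of_fderiv_eq_zero (hf.sub (fderiv ℝ f x).differentiable) hg (x + v) x
  rwa [Pi.sub_apply, Pi.sub_apply, map_add, sub_add_eq_sub_sub, sub_right_comm, sub_left_inj,
    sub_eq_iff_eq_add] at this

theorem deriv_deriv_deriv_quadratic (a b c : ℝ) :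
    deriv (deriv (deriv fun t => a + t * b + t ^ 2 * c)) = 0 := by
  have h1 : deriv (fun t => a + t * b + t ^ 2 * c) = fun t => b + 2 * t * c := funext fun t =>
    ((((hasDerivAt_id t).mul_const b).const_add a).add
      ((hasDerivAt_pow 2 t).mul_const c)).deriv.trans (by simp)
  have h2 : deriv (fun t => b + 2 * t * c) = fun _ => 2 * c := funext fun t =>
    ((((hasDerivAt_id t).const_mul 2).mul_const c).const_add b).deriv.trans (by simp)
  rw [h1, h2, deriv_const']
  rfl

namespace IsFlatHKV

variable {n : ℕ} {η : (Fin n → ℝ) →ₗ[ℝ] (Fin n → ℝ) →ₗ[ℝ] ℝ}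
  {ξ : (Fin n → ℝ) → Fin n → ℝ} {lam : ℝ}

theorem differentiable (h : IsFlatHKV η ξ lam) : Differentiable ℝ ξ :=
  h.1.differentiable (by simp)

theorem differentiable_fderiv (h : IsFlatHKV η ξ lam) : Differentiable ℝ (fderiv ℝ ξ) :=
  (h.1.fderiv_right (m := 1) (by norm_cast)).differentiable (by simp)

theorem fderiv_fderiv_antisymm (h : IsFlatHKV η ξ lam) (x u v w : Fin n → ℝ) :
    η (fderiv ℝ (fderiv ℝ ξ) x u v) w + η v (fderiv ℝ (fderiv ℝ ξ) x u w) = 0 := by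
  let Φ : ((Fin n → ℝ) →L[ℝ] Fin n → ℝ) →L[ℝ] ℝ :=
    (η.flip w).toContinuousLinearMap ∘L ContinuousLinearMap.apply ℝ _ v +
      (η v).toContinuousLinearMap ∘L ContinuousLinearMap.apply ℝ _ w
  have hconst : (fun y => Φ (fderiv ℝ ξ y)) = fun _ => lam * η v w := funext fun y => h.2 y v w
  have hΦ := (Φ.hasFDerivAt.comp x (h.differentiable_fderiv x).hasFDerivAt).unique
    (hconst ▸ hasFDerivAt_const (lam * η v w) x)
  simpa [Φ] using DFunLike.congr_fun hΦ u

theorem fderiv_fderiv_eq_zero (h : IsFlatHKV η ξ lam) (hsymm : IsSymmForm η)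
    (hnd : IsNondegForm η) (x : Fin n → ℝ) : fderiv ℝ (fderiv ℝ ξ) x = 0 := by
  set A := fderiv ℝ (fderiv ℝ ξ) x
  have hA : ∀ u v, A u v = A v u := second_derivative_symmetric
    (fun y => (h.differentiable y).hasFDerivAt) (h.differentiable_fderiv x).hasFDerivAt
  have hS : ∀ u v w, η (A u v) w = 0 := eq_zero_of_symm_of_antisymm (fun u v w => η (A u v) w)
    (fun u v w => by rw [hA]) (fun u v w => by
      rw [hsymm (A u w), eq_neg_iff_add_eq_zero]; exact h.fderiv_fderiv_antisymm x u v w)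
  exact ContinuousLinearMap.ext fun u => ContinuousLinearMap.ext fun v => hnd _ (hS u v)

theorem apply_add (h : IsFlatHKV η ξ lam) (hsymm : IsSymmForm η) (hnd : IsNondegForm η)
    (x v : Fin n → ℝ) : ξ (x + v) = ξ x + fderiv ℝ ξ x v :=
  apply_add_eq_of_fderiv_fderiv_eq_zero h.differentiable h.differentiable_fderiv
    (h.fderiv_fderiv_eq_zero hsymm hnd) x v

end IsFlatHKV

theorem LinearMap.apply_add_smul_add_smul {R M : Type*} [CommSemiring R] [AddCommMonoid M]
    [Module R M] (B : M →ₗ[R] M →ₗ[R] R) (a b c d : M) (t : R) :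
    B (a + t • b) (c + t • d) = B a c + t * (B b c + B a d) + t ^ 2 * B b d := by
  simp only [map_add, map_smul, LinearMap.add_apply, LinearMap.smul_apply, smul_eq_mul]
  ring

theorem flat_hkv_quadCharge_third_deriv_vanishes_general {n : ℕ}
    (η : (Fin n → ℝ) →ₗ[ℝ] (Fin n → ℝ) →ₗ[ℝ] ℝ)
    (hsymm : IsSymmForm η) (hnd : IsNondegForm η)
    (ξi ξj : (Fin n → ℝ) → Fin n → ℝ) (lami lamj : ℝ)
    (hi : IsFlatHKV η ξi lami) (hj : IsFlatHKV η ξj lamj) :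
    ∀ x p : Fin n → ℝ,
      (∀ t : ℝ,
        deriv (deriv (deriv (fun s => η (ξi (x + s • p)) (ξj (x + s • p))))) t = 0) ∧
      ∀ t : ℝ,
        η (ξi (x + t • p)) (ξj (x + t • p))
          = η (ξi x) (ξj x)
            + t * (η (fderiv ℝ ξi x p) (ξj x) + η (ξi x) (fderiv ℝ ξj x p))
            + t ^ 2 * η (fderiv ℝ ξi x p) (fderiv ℝ ξj x p) := by
  intro x p
  have hquad : ∀ t : ℝ, η (ξi (x + t • p)) (ξj (x + t • p))
      = η (ξi x) (ξj x)
        + t * (η (fderiv ℝ ξi x p) (ξj x) + η (ξi x) (fderiv ℝ ξj x p))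
        + t ^ 2 * η (fderiv ℝ ξi x p) (fderiv ℝ ξj x p) := fun t => by
    rw [hi.apply_add hsymm hnd, hj.apply_add hsymm hnd, map_smul, map_smul,
      η.apply_add_smul_add_smul]
  refine ⟨fun t => ?_, hquad⟩
  rw [funext hquad, deriv_deriv_deriv_quadratic, Pi.zero_apply]

/-- In flat space, the third time derivative of the quadratic charge
`V_{ij}` vanishes along geodesics: `f(t) = η(ξ_i(x + t p), ξ_j(x + t p))` has `f''' ≡ 0`;
explicitly, `f(t) = η(ξ_i(x), ξ_j(x)) + t [η(Dξ_i(x)p, ξ_j(x)) + η(ξ_i(x), Dξ_j(x)p)]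
+ t² η(Dξ_i(x)p, Dξ_j(x)p)`. -/
theorem flat_hkv_quadCharge_third_deriv_vanishes {n : ℕ} (hn : 1 ≤ n)
    (η : (Fin n → ℝ) →ₗ[ℝ] (Fin n → ℝ) →ₗ[ℝ] ℝ)
    (hsymm : IsSymmForm η) (hnd : IsNondegForm η)
    (ξi ξj : (Fin n → ℝ) → Fin n → ℝ) (lami lamj : ℝ)
    (hi : IsFlatHKV η ξi lami) (hj : IsFlatHKV η ξj lamj) :
    ∀ x p : Fin n → ℝ,
      (∀ t : ℝ,
        deriv (deriv (deriv (fun s => η (ξi (x + s • p)) (ξj (x + s • p))))) t = 0) ∧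
      ∀ t : ℝ,
        η (ξi (x + t • p)) (ξj (x + t • p))
          = η (ξi x) (ξj x)
            + t * (η (fderiv ℝ ξi x p) (ξj x) + η (ξi x) (fderiv ℝ ξj x p))
            + t ^ 2 * η (fderiv ℝ ξi x p) (fderiv ℝ ξj x p) :=
  flat_hkv_quadCharge_third_deriv_vanishes_general η hsymm hnd ξi ξj lami lamj hi hj
end

section
/- Closure of the algebra of quadratic charges: let ξ_(1), …, ξ_(m) be homothetic Killing vectors on (U, g) with homothety constants λ_1, …, λ_m, set V_{ab}(x) = g_{μν}(x) ξ_a^μ(x) ξ_b^ν(x), and suppose that for some pair i, j there are real constants α^1, …, α^m with ξ_i^σ ∇_σ ξ_j^ν + ξ_j^σ ∇_σ ξ_i^ν = Σ_l α^l ξ_l^ν on U. Then for every k ∈ {1, …, m} and every x ∈ U, ξ_k^μ ∂_μ V_{ij}(x) = λ_i V_{jk}(x) + λ_j V_{ik}(x) − Σ_l α^l V_{lk}(x); that is, the derivative of V_{ij} along any of the ξ_k is a linear combination (with constant coefficients) of the functions V_{ab}. -/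
open scoped BigOperators

noncomputable section

/-- Partial derivative `∂_μ f` of a real-valued function on `ℝⁿ`
in the `μ`-th coordinate direction. -/
def pd {n : ℕ} (f : (Fin n → ℝ) → ℝ) (μ : Fin n) (x : Fin n → ℝ) : ℝ :=
  fderiv ℝ f x (Pi.single μ 1)

/-- Christoffel symbols `Γ^ρ_{μν} = ½ g^{ρσ}(∂_μ g_{σν} + ∂_ν g_{σμ} − ∂_σ g_{μν})`. -/
def christoffel {n : ℕ} (g : (Fin n → ℝ) → Matrix (Fin n) (Fin n) ℝ) (ρ μ ν : Fin n)
    (x : Fin n → ℝ) : ℝ :=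
  (1 / 2) * ∑ σ : Fin n, (g x)⁻¹ ρ σ *
    (pd (fun y => g y σ ν) μ x + pd (fun y => g y σ μ) ν x - pd (fun y => g y μ ν) σ x)

/-- Lowered covector field `ξ_ν = g_{νσ} ξ^σ`. -/
def lowerIdx {n : ℕ} (g : (Fin n → ℝ) → Matrix (Fin n) (Fin n) ℝ)
    (ξ : (Fin n → ℝ) → Fin n → ℝ) (ν : Fin n) (x : Fin n → ℝ) : ℝ :=
  ∑ σ : Fin n, g x ν σ * ξ x σ

/-- Covariant derivative of the lowered vector field: `∇_μ ξ_ν = ∂_μ ξ_ν − Γ^σ_{μν} ξ_σ`. -/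
def covLow {n : ℕ} (g : (Fin n → ℝ) → Matrix (Fin n) (Fin n) ℝ)
    (ξ : (Fin n → ℝ) → Fin n → ℝ) (μ ν : Fin n) (x : Fin n → ℝ) : ℝ :=
  pd (fun y => lowerIdx g ξ ν y) μ x - ∑ σ : Fin n, christoffel g σ μ ν x * lowerIdx g ξ σ x

/-- Covariant derivative of the vector field: `∇_μ ξ^ν = ∂_μ ξ^ν + Γ^ν_{μσ} ξ^σ`. -/
def covUp {n : ℕ} (g : (Fin n → ℝ) → Matrix (Fin n) (Fin n) ℝ)
    (ξ : (Fin n → ℝ) → Fin n → ℝ) (μ ν : Fin n) (x : Fin n → ℝ) : ℝ :=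
  pd (fun y => ξ y ν) μ x + ∑ σ : Fin n, christoffel g ν μ σ x * ξ x σ

/-- Second covariant derivative `∇_μ ∇_ν ξ_ρ` of the lowered vector field, i.e. the covariant
derivative of the `(0,2)`-tensor `∇_ν ξ_ρ`, with one Christoffel term per index. -/
def covLow2 {n : ℕ} (g : (Fin n → ℝ) → Matrix (Fin n) (Fin n) ℝ)
    (ξ : (Fin n → ℝ) → Fin n → ℝ) (μ ν ρ : Fin n) (x : Fin n → ℝ) : ℝ :=
  pd (fun y => covLow g ξ ν ρ y) μ x
    - ∑ σ : Fin n, christoffel g σ μ ν x * covLow g ξ σ ρ x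
    - ∑ σ : Fin n, christoffel g σ μ ρ x * covLow g ξ ν σ x

/-- Riemann curvature tensor
`R^ρ_{σμν} = ∂_μ Γ^ρ_{νσ} − ∂_ν Γ^ρ_{μσ} + Γ^ρ_{μλ} Γ^λ_{νσ} − Γ^ρ_{νλ} Γ^λ_{μσ}`. -/
def riemannUp {n : ℕ} (g : (Fin n → ℝ) → Matrix (Fin n) (Fin n) ℝ) (ρ σ μ ν : Fin n)
    (x : Fin n → ℝ) : ℝ :=
  pd (fun y => christoffel g ρ ν σ y) μ x - pd (fun y => christoffel g ρ μ σ y) ν x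
    + ∑ l : Fin n, christoffel g ρ μ l x * christoffel g l ν σ x
    - ∑ l : Fin n, christoffel g ρ ν l x * christoffel g l μ σ x

/-- Lowered Riemann curvature tensor `R_{ρσμν} = g_{ρκ} R^κ_{σμν}`. -/
def riemannLow {n : ℕ} (g : (Fin n → ℝ) → Matrix (Fin n) (Fin n) ℝ) (ρ σ μ ν : Fin n)
    (x : Fin n → ℝ) : ℝ :=
  ∑ κ : Fin n, g x ρ κ * riemannUp g κ σ μ ν x

/-- `g` is a smooth pseudo-Riemannian metric on `U`: smooth, symmetric and invertible there. -/
def IsMetricOn {n : ℕ} (U : Set (Fin n → ℝ))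
    (g : (Fin n → ℝ) → Matrix (Fin n) (Fin n) ℝ) : Prop :=
  (∀ μ ν : Fin n, ContDiffOn ℝ (⊤ : ℕ∞) (fun x => g x μ ν) U) ∧
    (∀ x ∈ U, (g x).IsSymm) ∧ (∀ x ∈ U, IsUnit (g x).det)

/-- `ξ` is a homothetic Killing vector of `g` on `U` with homothety constant `lam`:
it is a smooth vector field satisfying `∇_μ ξ_ν + ∇_ν ξ_μ = lam g_{μν}` on `U`. -/
def IsHKVOn {n : ℕ} (U : Set (Fin n → ℝ)) (g : (Fin n → ℝ) → Matrix (Fin n) (Fin n) ℝ)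
    (ξ : (Fin n → ℝ) → Fin n → ℝ) (lam : ℝ) : Prop :=
  (∀ ν : Fin n, ContDiffOn ℝ (⊤ : ℕ∞) (fun x => ξ x ν) U) ∧
    ∀ x ∈ U, ∀ μ ν : Fin n, covLow g ξ μ ν x + covLow g ξ ν μ x = lam * g x μ ν

/-- Lie bracket of vector fields: `[ξ, ζ]^ν = ξ^μ ∂_μ ζ^ν − ζ^μ ∂_μ ξ^ν`. -/
def lieBracket {n : ℕ} (ξ ζ : (Fin n → ℝ) → Fin n → ℝ) (x : Fin n → ℝ) (ν : Fin n) : ℝ :=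
  ∑ μ : Fin n, ξ x μ * pd (fun y => ζ y ν) μ x - ∑ μ : Fin n, ζ x μ * pd (fun y => ξ y ν) μ x

/-- Quadratic charge `V_{ij} = g_{μν} ξ_i^μ ξ_j^ν`. -/
def quadCharge {n : ℕ} (g : (Fin n → ℝ) → Matrix (Fin n) (Fin n) ℝ)
    (ξi ξj : (Fin n → ℝ) → Fin n → ℝ) (x : Fin n → ℝ) : ℝ :=
  ∑ μ : Fin n, ∑ ν : Fin n, g x μ ν * ξi x μ * ξj x ν

end

/-!
By metric compatibility of `∇`,
`ξ_k^μ ∂_μ V_{ij} = ξ_k^μ ξ_j^ν ∇_μ ξ_{iν} + ξ_k^μ ξ_i^ν ∇_μ ξ_{jν}`.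
The homothety equation `∇_μ ξ_{aν} = λ_a g_{μν} - ∇_ν ξ_{aμ}` turns each term
`ξ_k^μ ξ_b^ν ∇_μ ξ_{aν}` into `λ_a V_{bk} - ξ_{kν} ξ_b^μ ∇_μ ξ_a^ν`, and the two remaining
contractions add up to `ξ_{kν}` times the left side of the closure hypothesis, i.e. to
`Σ_l α^l V_{lk}`. At a point everything is linear algebra in the matrices `(∇_μ ξ_ν)` and
`(∇_μ ξ^ν)`, related by `(∇_μ ξ_ν) = (∇_μ ξ^σ) g`.
-/

open Matrix Filter Topology

section Calculus

variable {n : ℕ} {x : Fin n → ℝ}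

theorem pd_fun_sum {ι : Type*} (s : Finset ι) {f : ι → (Fin n → ℝ) → ℝ}
    (hf : ∀ i ∈ s, DifferentiableAt ℝ (f i) x) (μ : Fin n) :
    pd (fun y => ∑ i ∈ s, f i y) μ x = ∑ i ∈ s, pd (f i) μ x := by
  simp only [pd, fderiv_fun_sum hf, _root_.sum_apply]

theorem pd_fun_mul {f h : (Fin n → ℝ) → ℝ} (hf : DifferentiableAt ℝ f x)
    (hh : DifferentiableAt ℝ h x) (μ : Fin n) :
    pd (fun y => f y * h y) μ x = pd f μ x * h x + f x * pd h μ x := by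
  simp only [pd, fderiv_fun_mul hf hh, _root_.add_apply, _root_.smul_apply,
    smul_eq_mul]
  ring

end Calculus

section Matrix

variable {ι R : Type*} [Fintype ι] [CommRing R]

theorem dotProduct_mulVec_add_swap_of_add_transpose_eq {A G : Matrix ι ι R} {c : R}
    (hA : A + Aᵀ = c • G) (v w : ι → R) :
    v ⬝ᵥ A *ᵥ w + w ⬝ᵥ A *ᵥ v = c * (v ⬝ᵥ G *ᵥ w) := by
  rw [← dotProduct_transpose_mulVec A v w, ← dotProduct_add, ← add_mulVec, hA, smul_mulVec,
    dotProduct_smul, smul_eq_mul]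

end Matrix

section Geometry

variable {n : ℕ} {U : Set (Fin n → ℝ)} {g : (Fin n → ℝ) → Matrix (Fin n) (Fin n) ℝ}
  {x : Fin n → ℝ}

noncomputable def covLowMatrix (g : (Fin n → ℝ) → Matrix (Fin n) (Fin n) ℝ)
    (ξ : (Fin n → ℝ) → Fin n → ℝ) (x : Fin n → ℝ) : Matrix (Fin n) (Fin n) ℝ :=
  Matrix.of fun μ ν => covLow g ξ μ ν x

noncomputable def covUpMatrix (g : (Fin n → ℝ) → Matrix (Fin n) (Fin n) ℝ)
    (ξ : (Fin n → ℝ) → Fin n → ℝ) (x : Fin n → ℝ) : Matrix (Fin n) (Fin n) ℝ :=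
  Matrix.of fun μ ν => covUp g ξ μ ν x

theorem quadCharge_eq_dotProduct (ξi ξj : (Fin n → ℝ) → Fin n → ℝ) :
    quadCharge g ξi ξj x = ξi x ⬝ᵥ g x *ᵥ ξj x := by
  simp only [quadCharge, dotProduct, mulVec, Finset.mul_sum]
  exact Finset.sum_congr rfl fun _ _ => Finset.sum_congr rfl fun _ _ => by ring

theorem pd_sum_mul_lowerIdx {ζ ξ : (Fin n → ℝ) → Fin n → ℝ}
    (hζ : ∀ ν, DifferentiableAt ℝ (fun y => ζ y ν) x)
    (hξ : ∀ ν, DifferentiableAt ℝ (lowerIdx g ξ ν) x) (μ : Fin n) :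
    pd (fun y => ∑ ν, ζ y ν * lowerIdx g ξ ν y) μ x
      = ∑ ν, covUp g ζ μ ν x * lowerIdx g ξ ν x + ∑ ν, ζ x ν * covLow g ξ μ ν x := by
  have hΓ : ∑ ν, (∑ σ, christoffel g ν μ σ x * ζ x σ) * lowerIdx g ξ ν x
      = ∑ ν, ζ x ν * ∑ σ, christoffel g σ μ ν x * lowerIdx g ξ σ x := by
    simp only [Finset.sum_mul, Finset.mul_sum]
    rw [Finset.sum_comm]
    exact Finset.sum_congr rfl fun _ _ => Finset.sum_congr rfl fun _ _ => by ring
  simp only [pd_fun_sum _ fun ν _ => (hζ ν).fun_mul (hξ ν), pd_fun_mul (hζ _) (hξ _), covUp,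
    covLow, add_mul, mul_sub, Finset.sum_add_distrib, Finset.sum_sub_distrib, hΓ]
  ring

namespace IsMetricOn

theorem differentiableAt (hg : IsMetricOn U g) (hU : IsOpen U) (hx : x ∈ U) (μ ν : Fin n) :
    DifferentiableAt ℝ (fun y => g y μ ν) x :=
  ((hg.1 μ ν).contDiffAt (hU.mem_nhds hx)).differentiableAt (by simp)

theorem differentiableAt_lowerIdx (hg : IsMetricOn U g) (hU : IsOpen U)
    (hx : x ∈ U) {ξ : (Fin n → ℝ) → Fin n → ℝ}
    (hξ : ∀ ν, DifferentiableAt ℝ (fun y => ξ y ν) x) (ν : Fin n) :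
    DifferentiableAt ℝ (lowerIdx g ξ ν) x :=
  DifferentiableAt.fun_sum fun σ _ => (hg.differentiableAt hU hx ν σ).fun_mul (hξ σ)

theorem pd_lowerIdx (hg : IsMetricOn U g) (hU : IsOpen U) (hx : x ∈ U)
    {ξ : (Fin n → ℝ) → Fin n → ℝ} (hξ : ∀ ν, DifferentiableAt ℝ (fun y => ξ y ν) x)
    (μ ν : Fin n) :
    pd (lowerIdx g ξ ν) μ x
      = ∑ σ, (pd (fun y => g y ν σ) μ x * ξ x σ + g x ν σ * pd (fun y => ξ y σ) μ x) := by
  unfold lowerIdx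
  rw [pd_fun_sum _ fun σ _ => (hg.differentiableAt hU hx ν σ).fun_mul (hξ σ)]
  exact Finset.sum_congr rfl fun σ _ => pd_fun_mul (hg.differentiableAt hU hx ν σ) (hξ σ) μ

theorem pd_symm (hg : IsMetricOn U g) (hU : IsOpen U) (hx : x ∈ U) (μ ν σ : Fin n) :
    pd (fun y => g y μ ν) σ x = pd (fun y => g y ν μ) σ x := by
  have heq : (fun y => g y μ ν) =ᶠ[𝓝 x] fun y => g y ν μ :=
    mem_of_superset (hU.mem_nhds hx) fun y hy => (hg.2.1 y hy).apply ν μ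
  rw [pd, pd, heq.fderiv_eq]

theorem mulVec_christoffel (hg : IsMetricOn U g) (hx : x ∈ U) (ρ μ ν : Fin n) :
    (g x *ᵥ fun σ => christoffel g σ μ ν x) ρ
      = (pd (fun y => g y ρ ν) μ x + pd (fun y => g y ρ μ) ν x
          - pd (fun y => g y μ ν) ρ x) / 2 := by
  have hΓ : (fun σ => christoffel g σ μ ν x) = (1 / 2 : ℝ) • ((g x)⁻¹ *ᵥ fun τ =>
      pd (fun y => g y τ ν) μ x + pd (fun y => g y τ μ) ν x - pd (fun y => g y μ ν) τ x) := by
    ext σ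
    rfl
  rw [hΓ, mulVec_smul, mulVec_mulVec, mul_nonsing_inv _ (hg.2.2 x hx), one_mulVec]
  simp only [Pi.smul_apply, smul_eq_mul]
  ring

-- `∇g = 0` in coordinates: `∂_μ g_{νρ} = Γ_{ρμν} + Γ_{νμρ}`.
theorem pd_eq_christoffel (hg : IsMetricOn U g) (hU : IsOpen U) (hx : x ∈ U) (μ ν ρ : Fin n) :
    pd (fun y => g y ν ρ) μ x
      = (g x *ᵥ fun σ => christoffel g σ μ ν x) ρ + (g x *ᵥ fun σ => christoffel g σ μ ρ x) ν := by
  rw [hg.mulVec_christoffel hx, hg.mulVec_christoffel hx, hg.pd_symm hU hx ρ ν μ,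
    hg.pd_symm hU hx ρ μ ν, hg.pd_symm hU hx μ ν ρ]
  ring

theorem covLowMatrix_eq (hg : IsMetricOn U g) (hU : IsOpen U) (hx : x ∈ U)
    {ξ : (Fin n → ℝ) → Fin n → ℝ} (hξ : ∀ ν, DifferentiableAt ℝ (fun y => ξ y ν) x) :
    covLowMatrix g ξ x = covUpMatrix g ξ x * g x := by
  ext μ ν
  have hG : (g x).IsSymm := hg.2.1 x hx
  have h1 : ∑ σ, (g x *ᵥ fun τ => christoffel g τ μ ν x) σ * ξ x σ
      = ∑ σ, christoffel g σ μ ν x * lowerIdx g ξ σ x := by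
    change (g x *ᵥ _) ⬝ᵥ ξ x = _ ⬝ᵥ g x *ᵥ ξ x
    rw [dotProduct_comm, ← dotProduct_transpose_mulVec, hG.eq]
  have h2 : ∑ σ, (g x *ᵥ fun τ => christoffel g τ μ σ x) ν * ξ x σ
      = ∑ σ, (∑ τ, christoffel g σ μ τ x * ξ x τ) * g x σ ν := by
    simp only [mulVec, dotProduct, Finset.sum_mul]
    rw [Finset.sum_comm]
    refine Finset.sum_congr rfl fun σ _ => Finset.sum_congr rfl fun τ _ => ?_
    rw [hG.apply σ ν]
    ring
  have h3 : ∑ σ, g x ν σ * pd (fun y => ξ y σ) μ x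
      = ∑ σ, pd (fun y => ξ y σ) μ x * g x σ ν :=
    Finset.sum_congr rfl fun σ _ => by rw [hG.apply σ ν, mul_comm]
  simp only [covLowMatrix, covUpMatrix, of_apply, mul_apply, covLow, covUp,
    hg.pd_lowerIdx hU hx hξ, hg.pd_eq_christoffel hU hx, add_mul, Finset.sum_add_distrib, h1, h2,
    h3]
  ring

theorem pd_quadCharge (hg : IsMetricOn U g) (hU : IsOpen U) (hx : x ∈ U)
    {ξi ξj : (Fin n → ℝ) → Fin n → ℝ} (hξi : ∀ ν, DifferentiableAt ℝ (fun y => ξi y ν) x)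
    (hξj : ∀ ν, DifferentiableAt ℝ (fun y => ξj y ν) x) (μ : Fin n) :
    pd (quadCharge g ξi ξj) μ x
      = (covLowMatrix g ξi x *ᵥ ξj x) μ + (covLowMatrix g ξj x *ᵥ ξi x) μ := by
  have hV : quadCharge g ξi ξj = fun y => ∑ ν, ξi y ν * lowerIdx g ξj ν y := by
    funext y
    exact quadCharge_eq_dotProduct ξi ξj
  rw [hV, pd_sum_mul_lowerIdx hξi (hg.differentiableAt_lowerIdx hU hx hξj),
    hg.covLowMatrix_eq hU hx hξi, ← mulVec_mulVec]
  congr 1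
  exact Finset.sum_congr rfl fun ν _ => mul_comm _ _

end IsMetricOn

namespace IsHKVOn

variable {ξ : (Fin n → ℝ) → Fin n → ℝ} {lam : ℝ}

theorem differentiableAt (h : IsHKVOn U g ξ lam) (hU : IsOpen U) (hx : x ∈ U) (ν : Fin n) :
    DifferentiableAt ℝ (fun y => ξ y ν) x :=
  ((h.1 ν).contDiffAt (hU.mem_nhds hx)).differentiableAt (by simp)

theorem covLowMatrix_add_transpose (h : IsHKVOn U g ξ lam) (hx : x ∈ U) :
    covLowMatrix g ξ x + (covLowMatrix g ξ x)ᵀ = lam • g x := by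
  ext μ ν
  exact h.2 x hx μ ν

theorem dotProduct_covLowMatrix_mulVec (h : IsHKVOn U g ξ lam) (hg : IsMetricOn U g)
    (hU : IsOpen U) (hx : x ∈ U) (v w : Fin n → ℝ) :
    v ⬝ᵥ covLowMatrix g ξ x *ᵥ w
      = lam * (w ⬝ᵥ g x *ᵥ v) - (w ᵥ* covUpMatrix g ξ x) ⬝ᵥ g x *ᵥ v := by
  have hwv : w ⬝ᵥ covLowMatrix g ξ x *ᵥ v = (w ᵥ* covUpMatrix g ξ x) ⬝ᵥ g x *ᵥ v := by
    rw [hg.covLowMatrix_eq hU hx (h.differentiableAt hU hx), ← mulVec_mulVec, dotProduct_mulVec]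
  rw [eq_sub_iff_add_eq, ← hwv, add_comm,
    dotProduct_mulVec_add_swap_of_add_transpose_eq (h.covLowMatrix_add_transpose hx)]

end IsHKVOn

end Geometry

theorem quadCharge_algebra_closure_general {n m : ℕ}
    (U : Set (Fin n → ℝ)) (hUopen : IsOpen U)
    (g : (Fin n → ℝ) → Matrix (Fin n) (Fin n) ℝ) (hg : IsMetricOn U g)
    (ξ : Fin m → (Fin n → ℝ) → Fin n → ℝ) (lam : Fin m → ℝ)
    (hξ : ∀ k : Fin m, IsHKVOn U g (ξ k) (lam k))
    (i j : Fin m) (α : Fin m → ℝ)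
    (hcl : ∀ x ∈ U, ∀ ν : Fin n,
      (∑ σ : Fin n, ξ i x σ * covUp g (ξ j) σ ν x)
        + ∑ σ : Fin n, ξ j x σ * covUp g (ξ i) σ ν x
        = ∑ l : Fin m, α l * ξ l x ν) :
    ∀ k : Fin m, ∀ x ∈ U,
      ∑ μ : Fin n, ξ k x μ * pd (quadCharge g (ξ i) (ξ j)) μ x
        = lam i * quadCharge g (ξ j) (ξ k) x + lam j * quadCharge g (ξ i) (ξ k) x
          - ∑ l : Fin m, α l * quadCharge g (ξ l) (ξ k) x := by
  intro k x hx
  have hderiv : ∑ μ, ξ k x μ * pd (quadCharge g (ξ i) (ξ j)) μ x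
      = ξ k x ⬝ᵥ covLowMatrix g (ξ i) x *ᵥ ξ j x + ξ k x ⬝ᵥ covLowMatrix g (ξ j) x *ᵥ ξ i x := by
    rw [← dotProduct_add]
    exact Finset.sum_congr rfl fun μ _ => by
      rw [hg.pd_quadCharge hUopen hx ((hξ i).differentiableAt hUopen hx)
        ((hξ j).differentiableAt hUopen hx)]
      rfl
  have hclosure : ξ j x ᵥ* covUpMatrix g (ξ i) x + ξ i x ᵥ* covUpMatrix g (ξ j) x
      = ∑ l, α l • ξ l x := by
    ext ν
    simpa [vecMul, dotProduct, covUpMatrix, add_comm] using hcl x hx ν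
  simp only [quadCharge_eq_dotProduct]
  rw [hderiv, (hξ i).dotProduct_covLowMatrix_mulVec hg hUopen hx,
    (hξ j).dotProduct_covLowMatrix_mulVec hg hUopen hx]
  have hsum : ∑ l, α l * (ξ l x ⬝ᵥ g x *ᵥ ξ k x)
      = (ξ j x ᵥ* covUpMatrix g (ξ i) x + ξ i x ᵥ* covUpMatrix g (ξ j) x) ⬝ᵥ g x *ᵥ ξ k x := by
    simp only [hclosure, sum_dotProduct, smul_dotProduct, smul_eq_mul]
  rw [hsum, add_dotProduct]
  ring

/-- Closure of the algebra of quadratic charges: if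
`ξ_i^σ ∇_σ ξ_j^ν + ξ_j^σ ∇_σ ξ_i^ν = Σ_l α^l ξ_l^ν` on `U` for constants `α^l`,
then for every `k`, `ξ_k^μ ∂_μ V_{ij} = λ_i V_{jk} + λ_j V_{ik} − Σ_l α^l V_{lk}` on `U`. -/
theorem quadCharge_algebra_closure {n m : ℕ} (hn : 1 ≤ n)
    (U : Set (Fin n → ℝ)) (hUopen : IsOpen U) (hUne : U.Nonempty)
    (g : (Fin n → ℝ) → Matrix (Fin n) (Fin n) ℝ) (hg : IsMetricOn U g)
    (ξ : Fin m → (Fin n → ℝ) → Fin n → ℝ) (lam : Fin m → ℝ)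
    (hξ : ∀ k : Fin m, IsHKVOn U g (ξ k) (lam k))
    (i j : Fin m) (α : Fin m → ℝ)
    (hcl : ∀ x ∈ U, ∀ ν : Fin n,
      (∑ σ : Fin n, ξ i x σ * covUp g (ξ j) σ ν x)
        + ∑ σ : Fin n, ξ j x σ * covUp g (ξ i) σ ν x
        = ∑ l : Fin m, α l * ξ l x ν) :
    ∀ k : Fin m, ∀ x ∈ U,
      ∑ μ : Fin n, ξ k x μ * pd (quadCharge g (ξ i) (ξ j)) μ x
        = lam i * quadCharge g (ξ j) (ξ k) x + lam j * quadCharge g (ξ i) (ξ k) x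
          - ∑ l : Fin m, α l * quadCharge g (ξ l) (ξ k) x :=
  quadCharge_algebra_closure_general U hUopen g hg ξ lam hξ i j α hcl
end
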